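/- arXiv:2012.10571 — 2 statements merged into one kernel-verified Lean document; each statement's English description precedes it below -/
import Mathlib

section
/- Cline's formula for generalized Zhou inverses: let a,b,c,d ∈ R satisfy bdb = bac and dbd = acd. If ac has a generalized Zhou inverse x, then bd has a generalized Zhou inverse, given by bx²d. -/
/-- x lies in the Jacobson radical: 1 - y*x is a unit for every y. -/
def inRadJ {R : Type*} [Ring R] (x : R) : Prop := ∀ y : R, IsUnit (1 - y * x)

/-- x ∈ √J(R): some power of x lies in the Jacobson radical. -/
def inSqrtJ {R : Type*} [Ring R] (x : R) : Prop := ∃ m : ℕ, 0 < m ∧ inRadJ (x ^ m)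

/-- x belongs to the double commutant of a. -/
def inComm2 {R : Type*} [Ring R] (a x : R) : Prop :=
  ∀ y : R, y * a = a * y → x * y = y * x

/-- b is a generalized Zhou inverse of a. -/
def IsGZhouInv {R : Type*} [Ring R] (a b : R) : Prop :=
  b * a * b = b ∧ inComm2 a b ∧ ∃ n : ℕ, 0 < n ∧ inSqrtJ (a ^ n - a * b)

/-- b is a Zhou inverse of a. -/
def IsZhouInv {R : Type*} [Ring R] (a b : R) : Prop :=
  b * a * b = b ∧ inComm2 a b ∧ ∃ n : ℕ, 0 < n ∧ IsNilpotent (a ^ n - a * b)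

private lemma junit_swap {R : Type*} [Ring R] {a b : R} (h : IsUnit (1 - a * b)) :
    IsUnit (1 - b * a) := by
  refine ⟨⟨1 - b * a, 1 + b * h.unit.inv * a, ?_, ?_⟩, rfl⟩
  · calc (1 - b * a) * (1 + b * (IsUnit.unit h).inv * a) =
        1 - b * a + b * ((1 - a * b) * h.unit.inv) * a := by noncomm_ring
      _ = 1 := by simp only [Units.inv_eq_val_inv, IsUnit.mul_val_inv, mul_one, sub_add_cancel]
  · calc (1 + b * (IsUnit.unit h).inv * a) * (1 - b * a) =
        1 - b * a + b * (h.unit.inv * (1 - a * b)) * a := by noncomm_ring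
      _ = 1 := by simp only [Units.inv_eq_val_inv, IsUnit.val_inv_mul, mul_one, sub_add_cancel]

private lemma inRadJ_mul_left {R : Type*} [Ring R] {z : R} (h : inRadJ z) (r : R) :
    inRadJ (r * z) := fun y => by rw [← mul_assoc]; exact h (y * r)

private lemma inRadJ_mul_right {R : Type*} [Ring R] {z : R} (h : inRadJ z) (r : R) :
    inRadJ (z * r) := fun y => by
  have h1 : IsUnit (1 - r * (y * z)) := by
    have := h (r * y); rwa [mul_assoc] at this
  have h2 := junit_swap h1
  rwa [mul_assoc] at h2

private lemma pow_swap_eq {R : Type*} [Ring R] (u v : R) (m : ℕ) :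
    (v * u) ^ (m + 1) = v * ((u * v) ^ m * u) := by
  induction m with
  | zero => simp [mul_assoc]
  | succ m ih =>
    rw [pow_succ, ih, pow_succ]
    noncomm_ring

private lemma inSqrtJ_swap {R : Type*} [Ring R] {u v : R} (h : inSqrtJ (u * v)) :
    inSqrtJ (v * u) := by
  obtain ⟨m, hm, hr⟩ := h
  refine ⟨m + 1, Nat.succ_pos m, ?_⟩
  rw [pow_swap_eq]
  exact inRadJ_mul_left (inRadJ_mul_right hr u) v

private lemma idem_pow {S : Type*} [Monoid S] {f : S} (hf : f * f = f) (m : ℕ) :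
    f ^ (m + 1) = f := by
  induction m with
  | zero => simp
  | succ m ih => rw [pow_succ, ih, hf]

private lemma idem_mul_pow {S : Type*} [CommMonoid S] {f : S} (hf : f * f = f)
    (T : S) (m : ℕ) : T ^ (m + 1) * f = (T * f) ^ (m + 1) := by
  rw [mul_pow, idem_pow hf]

private lemma corePoly {S : Type*} [CommRing S] (W X P v : S)
    (hX : X * W * X = X) (hP : P * P = W * P) (k : ℕ) :
    ∃ r : S, ((v * (v * W) - X) * P) ^ (k + 1) = r * (v * W - W * X) ^ k := by
  obtain ⟨f, hfdef⟩ : ∃ f, f = W * X := ⟨_, rfl⟩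
  rw [← hfdef]
  obtain ⟨s, hsdef⟩ : ∃ s, s = v * W - f := ⟨_, rfl⟩
  rw [← hsdef]
  obtain ⟨g, hgdef⟩ : ∃ g, g = (v * W + 1) * f + s * (1 - f) := ⟨_, rfl⟩
  obtain ⟨s₂, hs2def⟩ : ∃ s₂, s₂ = (v * W) ^ 2 - f := ⟨_, rfl⟩
  have hf : f * f = f := by rw [hfdef]; linear_combination W * hX
  have h1f : (1 - f) * (1 - f) = 1 - f := by linear_combination hf
  have hPpow : ∀ m : ℕ, P ^ (m + 1) = W ^ m * P := by
    intro m
    induction m with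
    | zero => simp
    | succ m ih => rw [pow_succ, ih, mul_assoc, hP]; ring
  have hsg : s₂ = s * g := by
    rw [hs2def, hsdef, hgdef, hsdef]; linear_combination (f + 1 - v * W) * hf
  have hstep : (v * W) ^ 2 * (1 - f) = s₂ * (1 - f) := by
    rw [hs2def]; linear_combination -hf
  have hu2 : ∀ m : ℕ, ((v * W) ^ 2) ^ m * (1 - f) = s₂ ^ m * (1 - f) := by
    intro m
    induction m with
    | zero => simp
    | succ m ih =>
      calc ((v * W) ^ 2) ^ (m + 1) * (1 - f)
          = ((v * W) ^ 2) ^ m * ((v * W) ^ 2 * (1 - f)) := by ring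
        _ = ((v * W) ^ 2) ^ m * (s₂ * (1 - f)) := by rw [hstep]
        _ = (((v * W) ^ 2) ^ m * (1 - f)) * s₂ := by ring
        _ = (s₂ ^ m * (1 - f)) * s₂ := by rw [ih]
        _ = s₂ ^ (m + 1) * (1 - f) := by ring
  have hTf : ((v * (v * W) - X) * P) * f = s₂ * X * P := by
    rw [hs2def, hfdef]; ring
  have hT1f : ((v * (v * W) - X) * P) * (1 - f) = (v * (v * W)) * (1 - f) * P := by
    rw [hfdef]; linear_combination P * hX
  refine ⟨s * g ^ (k + 1) * X ^ (k + 1) * P ^ (k + 1)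
      + g ^ k * (v * (v * W)) * (1 - f) * P, ?_⟩
  calc ((v * (v * W) - X) * P) ^ (k + 1)
      = ((v * (v * W) - X) * P) ^ (k + 1) * f
        + ((v * (v * W) - X) * P) ^ (k + 1) * (1 - f) := by ring
    _ = (((v * (v * W) - X) * P) * f) ^ (k + 1)
        + (((v * (v * W) - X) * P) * (1 - f)) ^ (k + 1) := by
        rw [idem_mul_pow hf, idem_mul_pow h1f]
    _ = (s₂ * X * P) ^ (k + 1) + ((v * (v * W)) * (1 - f) * P) ^ (k + 1) := by
        rw [hTf, hT1f]
    _ = s₂ ^ (k + 1) * X ^ (k + 1) * P ^ (k + 1)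
        + (v * (v * W)) ^ (k + 1) * (1 - f) ^ (k + 1) * P ^ (k + 1) := by
        rw [mul_pow, mul_pow, mul_pow, mul_pow]
    _ = s₂ ^ (k + 1) * X ^ (k + 1) * P ^ (k + 1)
        + (v * (v * W)) ^ (k + 1) * (1 - f) * (W ^ k * P) := by
        rw [idem_pow h1f, hPpow]
    _ = s₂ ^ (k + 1) * X ^ (k + 1) * P ^ (k + 1)
        + (v * (v * W)) * (((v * W) ^ 2) ^ k * (1 - f)) * P := by ring
    _ = s₂ ^ (k + 1) * X ^ (k + 1) * P ^ (k + 1)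
        + (v * (v * W)) * (s₂ ^ k * (1 - f)) * P := by rw [hu2]
    _ = (s * g) ^ (k + 1) * X ^ (k + 1) * P ^ (k + 1)
        + (v * (v * W)) * ((s * g) ^ k * (1 - f)) * P := by rw [← hsg]
    _ = (s * g ^ (k + 1) * X ^ (k + 1) * P ^ (k + 1)
        + g ^ k * (v * (v * W)) * (1 - f) * P) * s ^ k := by
        rw [mul_pow, mul_pow]; ring

theorem stmt11 {R : Type*} [Ring R] (a b c d x : R)
    (h1 : b * d * b = b * (a * c)) (h2 : d * b * d = a * c * d)
    (hx : IsGZhouInv (a * c) x) :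
    IsGZhouInv (b * d) (b * x ^ 2 * d) := by
  obtain ⟨hx1, hx2, n, hn, hsJ⟩ := hx
  set w := a * c with hw
  -- basic commutation facts
  have hxw : x * w = w * x := hx2 w rfl
  have hpw : (d * b) * w = w * (d * b) := by
    calc d * b * w = d * (b * d * b) := by rw [mul_assoc, ← h1]
      _ = d * b * d * b := by rw [← mul_assoc, ← mul_assoc]
      _ = w * d * b := by rw [h2]
      _ = w * (d * b) := by rw [mul_assoc]
  have hxp : x * (d * b) = (d * b) * x := hx2 (d * b) hpw
  have hxpC : Commute x (d * b) := hxp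
  -- power facts
  have hx1' : x * (w * x) = x := by rw [← mul_assoc]; exact hx1
  have hxxw : x ^ 2 * w = x := by
    calc x ^ 2 * w = x * (x * w) := by rw [sq, mul_assoc]
      _ = x * (w * x) := by rw [hxw]
      _ = x := hx1'
  have hwxx : w * x ^ 2 = x := by
    calc w * x ^ 2 = w * x * x := by rw [sq, ← mul_assoc]
      _ = x * w * x := by rw [← hxw]
      _ = x := hx1
  have hx3w : x ^ 3 * w = x ^ 2 := by
    calc x ^ 3 * w = x * (x ^ 2 * w) := by
          rw [show (3 : ℕ) = 1 + 2 from rfl, pow_add, pow_one, mul_assoc]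
      _ = x * x := by rw [hxxw]
      _ = x ^ 2 := (sq x).symm
  have hwx4 : w * x ^ 4 = x ^ 3 := by
    calc w * x ^ 4 = (w * x ^ 2) * x ^ 2 := by
          rw [show (4 : ℕ) = 2 + 2 from rfl, pow_add, ← mul_assoc]
      _ = x * x ^ 2 := by rw [hwxx]
      _ = x ^ 3 := by rw [show (3 : ℕ) = 1 + 2 from rfl, pow_add, pow_one]
  have hx24 : x ^ 4 * w ^ 2 = x ^ 2 := by
    calc x ^ 4 * w ^ 2 = x ^ 2 * ((x ^ 2 * w) * w) := by
          rw [show (4 : ℕ) = 2 + 2 from rfl, pow_add, sq w]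
          noncomm_ring
      _ = x ^ 2 * (x * w) := by rw [hxxw]
      _ = x ^ 3 * w := by rw [← mul_assoc, ← pow_succ]
      _ = x ^ 2 := hx3w
  refine ⟨?_, ?_, 2 * n, by omega, ?_⟩
  · -- Part 1
    have c2 : x ^ 2 * (d * b) = (d * b) * x ^ 2 := (hxpC.pow_left 2)
    calc b * x ^ 2 * d * (b * d) * (b * x ^ 2 * d)
        = b * x ^ 2 * ((d * b * d) * (b * (x ^ 2 * d))) := by noncomm_ring
      _ = b * x ^ 2 * ((w * d) * (b * (x ^ 2 * d))) := by rw [h2]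
      _ = b * ((x ^ 2 * w) * ((d * b) * x ^ 2) * d) := by noncomm_ring
      _ = b * (x * ((d * b) * x ^ 2) * d) := by rw [hxxw]
      _ = b * (x * (x ^ 2 * (d * b)) * d) := by rw [← c2]
      _ = b * (x ^ 3 * (d * b * d)) := by noncomm_ring
      _ = b * (x ^ 3 * (w * d)) := by rw [h2]
      _ = b * (x ^ 3 * w) * d := by noncomm_ring
      _ = b * x ^ 2 * d := by rw [hx3w]
  · -- Part 2
    intro y hy
    have hzw : (d * y * b) * w = w * (d * y * b) := by
      calc d * y * b * w = d * y * (b * w) := by rw [mul_assoc]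
        _ = d * y * (b * d * b) := by rw [← h1]
        _ = d * ((y * (b * d)) * b) := by noncomm_ring
        _ = d * (((b * d) * y) * b) := by rw [hy]
        _ = (d * b * d) * (y * b) := by noncomm_ring
        _ = (w * d) * (y * b) := by rw [h2]
        _ = w * (d * y * b) := by noncomm_ring
    have hxz : x * (d * y * b) = (d * y * b) * x := hx2 (d * y * b) hzw
    have hxzC : Commute x (d * y * b) := hxz
    have czx4 : x ^ 4 * (d * y * b) = (d * y * b) * x ^ 4 := hxzC.pow_left 4
    have c4 : x ^ 4 * (d * b) = (d * b) * x ^ 4 := hxpC.pow_left 4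
    have hw2d : w ^ 2 * d = (d * b * d) * (b * d) := by
      calc w ^ 2 * d = w * (w * d) := by rw [sq, mul_assoc]
        _ = w * (d * b * d) := by rw [← h2]
        _ = (w * d) * (b * d) := by noncomm_ring
        _ = (d * b * d) * (b * d) := by rw [← h2]
    calc b * x ^ 2 * d * y
        = b * (x ^ 4 * w ^ 2) * (d * y) := by rw [hx24, mul_assoc]
      _ = b * x ^ 4 * (w ^ 2 * d) * y := by noncomm_ring
      _ = b * x ^ 4 * ((d * b * d) * (b * d)) * y := by rw [hw2d]
      _ = b * x ^ 4 * (d * b * d) * ((b * d) * y) := by noncomm_ring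
      _ = b * x ^ 4 * (d * b * d) * (y * (b * d)) := by rw [← hy]
      _ = b * (x ^ 4 * (d * b)) * ((d * y * b) * d) := by noncomm_ring
      _ = b * ((d * b) * x ^ 4) * ((d * y * b) * d) := by rw [c4]
      _ = b * (d * b) * (x ^ 4 * (d * y * b)) * d := by noncomm_ring
      _ = b * (d * b) * ((d * y * b) * x ^ 4) * d := by rw [czx4]
      _ = (b * d * b) * ((d * y * b) * (x ^ 4 * d)) := by noncomm_ring
      _ = (b * w) * ((d * y * b) * (x ^ 4 * d)) := by rw [h1]
      _ = b * (w * d) * (y * (b * (x ^ 4 * d))) := by noncomm_ring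
      _ = b * (d * b * d) * (y * (b * (x ^ 4 * d))) := by rw [← h2]
      _ = (b * d) * ((b * d) * y) * (b * (x ^ 4 * d)) := by noncomm_ring
      _ = (b * d) * (y * (b * d)) * (b * (x ^ 4 * d)) := by rw [← hy]
      _ = ((b * d) * y) * ((b * d) * (b * (x ^ 4 * d))) := by noncomm_ring
      _ = (y * (b * d)) * ((b * d) * (b * (x ^ 4 * d))) := by rw [← hy]
      _ = y * ((b * d * b) * (d * b * (x ^ 4 * d))) := by noncomm_ring
      _ = y * ((b * w) * (d * b * (x ^ 4 * d))) := by rw [h1]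
      _ = y * (b * w * ((d * b) * x ^ 4) * d) := by noncomm_ring
      _ = y * (b * w * (x ^ 4 * (d * b)) * d) := by rw [← c4]
      _ = y * (b * (w * x ^ 4) * (d * b * d)) := by noncomm_ring
      _ = y * (b * x ^ 3 * (w * d)) := by rw [hwx4, h2]
      _ = y * (b * (x ^ 3 * w) * d) := by noncomm_ring
      _ = y * (b * x ^ 2 * d) := by rw [hx3w]
  · -- Part 3
    obtain ⟨k, hk0, hk⟩ := hsJ
    have hpp : (d * b) * (d * b) = w * (d * b) := by
      calc (d * b) * (d * b) = (d * b * d) * b := by rw [← mul_assoc]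
        _ = (w * d) * b := by rw [h2]
        _ = w * (d * b) := by rw [mul_assoc]
    have hcomm : ∀ g1 ∈ ({w, x, d * b} : Set R), ∀ g2 ∈ ({w, x, d * b} : Set R),
        g1 * g2 = g2 * g1 := by
      intro g1 hg1 g2 hg2
      simp only [Set.mem_insert_iff, Set.mem_singleton_iff] at hg1 hg2
      rcases hg1 with rfl | rfl | rfl <;> rcases hg2 with rfl | rfl | rfl <;>
        first
          | rfl
          | exact hxw.symm
          | exact hxw
          | exact hpw
          | exact hpw.symm
          | exact hxp
          | exact hxp.symm
    letI : CommRing (Subring.closure ({w, x, d * b} : Set R)) :=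
      Subring.closureCommRingOfComm hcomm
    have hwm : w ∈ Subring.closure ({w, x, d * b} : Set R) := Subring.subset_closure (by simp)
    have hxm : x ∈ Subring.closure ({w, x, d * b} : Set R) := Subring.subset_closure (by simp)
    have hpm : d * b ∈ Subring.closure ({w, x, d * b} : Set R) := Subring.subset_closure (by simp)
    set W : Subring.closure ({w, x, d * b} : Set R) := ⟨w, hwm⟩ with hWdef
    set X : Subring.closure ({w, x, d * b} : Set R) := ⟨x, hxm⟩ with hXdef
    set P : Subring.closure ({w, x, d * b} : Set R) := ⟨d * b, hpm⟩ with hPdef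
    have hXr : X * W * X = X := by
      apply Subtype.ext; show x * w * x = x; exact hx1
    have hPr : P * P = W * P := by
      apply Subtype.ext; show (d * b) * (d * b) = w * (d * b); exact hpp
    obtain ⟨r, hr⟩ := corePoly W X P (W ^ (n - 1)) hXr hPr k
    have hW1 : W ^ (n - 1) * W = W ^ n := by
      rw [← pow_succ]; congr 1; omega
    have hW2 : W ^ (n - 1) * (W ^ (n - 1) * W) = W ^ (2 * n - 1) := by
      rw [hW1, ← pow_add]; congr 1; omega
    rw [hW2, hW1] at hr
    have hrR : ((w ^ (2 * n - 1) - x) * (d * b)) ^ (k + 1)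
        = (r : R) * ((w ^ n - w * x) ^ k) := by
      have h := congrArg (Subtype.val) hr
      simp only [SubmonoidClass.coe_pow, MulMemClass.coe_mul, AddSubgroupClass.coe_sub] at h
      exact h
    have hbdpow : ∀ j : ℕ, (b * d) ^ (j + 2) = b * w ^ (j + 1) * d := by
      intro j
      induction j with
      | zero =>
        rw [pow_two, pow_one]
        calc (b * d) * (b * d) = (b * d * b) * d := by rw [← mul_assoc]
          _ = (b * w) * d := by rw [h1]
      | succ j ih =>
        calc (b * d) ^ (j + 1 + 2) = (b * d) ^ (j + 2) * (b * d) := by rw [← pow_succ]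
          _ = (b * w ^ (j + 1) * d) * (b * d) := by rw [ih]
          _ = b * w ^ (j + 1) * (d * b * d) := by noncomm_ring
          _ = b * w ^ (j + 1) * (w * d) := by rw [h2]
          _ = b * (w ^ (j + 1) * w) * d := by rw [← mul_assoc, mul_assoc b]
          _ = b * w ^ (j + 1 + 1) * d := by rw [pow_succ w (j + 1)]
    have hbd2n : (b * d) ^ (2 * n) = b * w ^ (2 * n - 1) * d := by
      have e1 : 2 * n = (2 * n - 2) + 2 := by omega
      have e2 : (2 * n - 2) + 1 = 2 * n - 1 := by omega
      have h := hbdpow (2 * n - 2)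
      rw [e2] at h
      rwa [← e1] at h
    have hbde : (b * d) * (b * x ^ 2 * d) = b * x * d := by
      calc (b * d) * (b * x ^ 2 * d) = (b * d * b) * (x ^ 2 * d) := by noncomm_ring
        _ = (b * w) * (x ^ 2 * d) := by rw [h1]
        _ = b * (w * x ^ 2) * d := by noncomm_ring
        _ = b * x * d := by rw [hwxx]
    have hgoal : (b * d) ^ (2 * n) - (b * d) * (b * x ^ 2 * d)
        = b * ((w ^ (2 * n - 1) - x) * d) := by
      rw [hbd2n, hbde]; noncomm_ring
    rw [hgoal]
    apply inSqrtJ_swap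
    refine ⟨k + 1, by omega, fun y => ?_⟩
    have hassoc : ((w ^ (2 * n - 1) - x) * d) * b = (w ^ (2 * n - 1) - x) * (d * b) :=
      mul_assoc _ _ _
    rw [hassoc, hrR, ← mul_assoc]
    exact hk (y * (r : R))
end

section
/- If (1 − ab)^k has a generalized Zhou inverse for some k ∈ ℕ, then (1 − ba)^k has a generalized Zhou inverse. -/
section Helpers
variable {R : Type*} [Ring R]

theorem unitSwap {a b : R} (h : IsUnit (1 - a * b)) : IsUnit (1 - b * a) := by
  obtain ⟨v, hv⟩ := h
  have hv1 : (1 - a * b) * ↑v⁻¹ = 1 := by rw [← hv]; exact v.mul_inv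
  have hv2 : (↑v⁻¹ : R) * (1 - a * b) = 1 := by rw [← hv]; exact v.inv_mul
  refine ⟨⟨1 - b * a, 1 + b * ↑v⁻¹ * a, ?_, ?_⟩, rfl⟩
  · have h1 : (1 - b * a) * (1 + b * ↑v⁻¹ * a)
        = 1 - b * a + b * ((1 - a * b) * ↑v⁻¹) * a := by noncomm_ring
    rw [h1, hv1]; noncomm_ring
  · have h1 : (1 + b * ↑v⁻¹ * a) * (1 - b * a)
        = 1 - b * a + b * (↑v⁻¹ * (1 - a * b)) * a := by noncomm_ring
    rw [h1, hv2]; noncomm_ring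

theorem radJ_zero : inRadJ (0 : R) := fun y => by simp

theorem radJ_mul_left (r : R) {x : R} (h : inRadJ x) : inRadJ (r * x) := by
  intro y
  have := h (y * r)
  rwa [mul_assoc] at this

theorem radJ_mul_right {x : R} (h : inRadJ x) (r : R) : inRadJ (x * r) := by
  intro y
  have h1 : IsUnit (1 - r * (y * x)) := by
    have := h (r * y); rwa [mul_assoc] at this
  have h2 := unitSwap h1
  rwa [mul_assoc] at h2

theorem radJ_neg {x : R} (h : inRadJ x) : inRadJ (-x) := by
  intro y
  have := h (-y)
  have h2 : 1 - -y * x = 1 - y * -x := by noncomm_ring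
  rwa [h2] at this

theorem radJ_add {x y : R} (hx : inRadJ x) (hy : inRadJ y) : inRadJ (x + y) := by
  intro z
  obtain ⟨w, hw⟩ := hx z
  have h2 : IsUnit (1 - ↑w⁻¹ * z * y) := hy (↑w⁻¹ * z)
  have key : (↑w : R) * (1 - ↑w⁻¹ * z * y) = 1 - z * (x + y) := by
    have hwi : (↑w : R) * ↑w⁻¹ = 1 := w.mul_inv
    calc (↑w : R) * (1 - ↑w⁻¹ * z * y) = ↑w - (↑w * ↑w⁻¹) * (z * y) := by noncomm_ring
    _ = ↑w - z * y := by rw [hwi]; noncomm_ring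
    _ = (1 - z * x) - z * y := by rw [hw]
    _ = 1 - z * (x + y) := by noncomm_ring
  have := (w.isUnit.mul h2)
  rwa [key] at this

theorem radJ_sum {ι : Type*} (s : Finset ι) (f : ι → R) (h : ∀ i ∈ s, inRadJ (f i)) :
    inRadJ (∑ i ∈ s, f i) :=
  Finset.sum_induction f inRadJ (fun _ _ ha hb => radJ_add ha hb) radJ_zero h

theorem radJ_pow_split {x : R} {M i : ℕ} (hM : M ≤ i) (h : inRadJ (x ^ M)) :
    inRadJ (x ^ i) := by
  have hxi : (x : R) ^ i = x ^ M * x ^ (i - M) := by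
    rw [← pow_add, Nat.add_sub_cancel' hM]
  rw [hxi]; exact radJ_mul_right h _

theorem radJ_pow_add {x y : R} (hc : Commute x y) {Mx My : ℕ}
    (hx : inRadJ (x ^ Mx)) (hy : inRadJ (y ^ My)) : inRadJ ((x + y) ^ (Mx + My)) := by
  rw [hc.add_pow]
  apply radJ_sum
  intro i _
  by_cases hi : Mx ≤ i
  · exact radJ_mul_right (radJ_mul_right (radJ_pow_split hi hx) _) _
  · have hle : My ≤ Mx + My - i := by omega
    exact radJ_mul_right (radJ_mul_left _ (radJ_pow_split hle hy)) _

theorem radJ_neg_pow {y : R} {M : ℕ} (h : inRadJ (y ^ M)) : inRadJ ((-y) ^ M) := by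
  rcases Nat.even_or_odd M with he | ho
  · rw [he.neg_pow]; exact h
  · rw [ho.neg_pow]; exact radJ_neg h

theorem isUnit_one_sub_of_radJ_pow {z : R} {M : ℕ} (hM : 0 < M) (h : inRadJ (z ^ M)) :
    IsUnit (1 - z) := by
  have hgeom : (∑ i ∈ Finset.range M, z ^ i) * (1 - z) = 1 - z ^ M := by
    have h1 := geom_sum_mul z M
    calc (∑ i ∈ Finset.range M, z ^ i) * (1 - z)
        = -((∑ i ∈ Finset.range M, z ^ i) * (z - 1)) := by noncomm_ring
      _ = -(z ^ M - 1) := by rw [h1]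
      _ = 1 - z ^ M := by noncomm_ring
  have hgeom2 : (1 - z) * (∑ i ∈ Finset.range M, z ^ i) = 1 - z ^ M := by
    have hcomm : Commute (1 - z) (∑ i ∈ Finset.range M, z ^ i) :=
      Commute.sum_right _ _ _ fun i _ => ((Commute.one_left z).sub_left (Commute.refl z)).pow_right i
    rw [hcomm.eq, hgeom]

  have hu : IsUnit (1 - z ^ M) := by have := h 1; rwa [one_mul] at this
  obtain ⟨w, hw⟩ := hu
  have hwc : Commute (1 - z) (↑w : R) := by
    rw [hw]
    exact Commute.sub_right (Commute.one_right _)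
      (Commute.sub_left (Commute.one_left _) ((Commute.refl z).pow_right M))
  have hwinv : Commute (1 - z) (↑w⁻¹ : R) := hwc.units_inv_right
  refine ⟨⟨1 - z, (∑ i ∈ Finset.range M, z ^ i) * ↑w⁻¹, ?_, ?_⟩, rfl⟩
  · calc (1 - z) * ((∑ i ∈ Finset.range M, z ^ i) * ↑w⁻¹)
        = ((1 - z) * (∑ i ∈ Finset.range M, z ^ i)) * ↑w⁻¹ := by rw [mul_assoc]
      _ = (1 - z ^ M) * ↑w⁻¹ := by rw [hgeom2]
      _ = ↑w * ↑w⁻¹ := by rw [hw]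
      _ = 1 := w.mul_inv
  · calc ((∑ i ∈ Finset.range M, z ^ i) * ↑w⁻¹) * (1 - z)
        = (∑ i ∈ Finset.range M, z ^ i) * (↑w⁻¹ * (1 - z)) := by rw [mul_assoc]
      _ = (∑ i ∈ Finset.range M, z ^ i) * ((1 - z) * ↑w⁻¹) := by rw [hwinv.eq]
      _ = ((∑ i ∈ Finset.range M, z ^ i) * (1 - z)) * ↑w⁻¹ := by noncomm_ring
      _ = (1 - z ^ M) * ↑w⁻¹ := by rw [hgeom]
      _ = ↑w * ↑w⁻¹ := by rw [hw]
      _ = 1 := w.mul_inv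

theorem idem_pow_s14 {p : R} (hp : p * p = p) : ∀ M, p ^ (M + 1) = p := by
  intro M
  induction M with
  | zero => rw [pow_one]
  | succ M ih => rw [pow_succ, ih, hp]

theorem cpa_pow (a c P : R) (h : P * (a * c) = (a * c) * P) :
    ∀ M, (c * (P * a)) ^ (M + 1) = c * ((P ^ (M + 1) * (a * c) ^ M) * a) := by
  have hc : Commute P (a * c) := h
  intro M
  induction M with
  | zero => rw [pow_one, pow_one, pow_zero, mul_one]
  | succ M ih =>
    rw [pow_succ, ih]
    calc (c * ((P ^ (M + 1) * (a * c) ^ M) * a)) * (c * (P * a))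
        = c * ((P ^ (M + 1) * ((a * c) ^ M * ((a * c) * P))) * a) := by noncomm_ring
      _ = c * ((P ^ (M + 1) * ((a * c) ^ M * (P * (a * c)))) * a) := by rw [← h]
      _ = c * ((P ^ (M + 1) * (((a * c) ^ M * P) * (a * c))) * a) := by noncomm_ring
      _ = c * ((P ^ (M + 1) * ((P * (a * c) ^ M) * (a * c))) * a) := by
          rw [(hc.pow_right M).eq]
      _ = c * (((P ^ (M + 1) * P) * ((a * c) ^ M * (a * c))) * a) := by noncomm_ring
      _ = c * ((P ^ (M + 1 + 1) * (a * c) ^ (M + 1)) * a) := by rw [← pow_succ, ← pow_succ]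

end Helpers

theorem coreJac {R : Type*} [Ring R] (a c x : R) (hx : IsGZhouInv (1 - a * c) x) :
    ∃ y : R, IsGZhouInv (1 - c * a) y := by
  obtain ⟨hx1, hx2, n, hn, hsq⟩ := hx
  obtain ⟨M2, hM2, hν⟩ := hsq
  obtain ⟨K, rfl⟩ : ∃ K, n = K + 1 := ⟨n - 1, by omega⟩
  obtain ⟨K2, rfl⟩ : ∃ K2, M2 = K2 + 1 := ⟨M2 - 1, by omega⟩
  set A : R := 1 - a * c with hA
  set B : R := 1 - c * a with hB
  have hac : a * c = 1 - A := by rw [hA]; noncomm_ring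
  have hca : c * a = 1 - B := by rw [hB]; noncomm_ring
  have hxA : x * A = A * x := hx2 A rfl
  obtain ⟨e, he⟩ : ∃ e : R, e = A * x := ⟨_, rfl⟩
  rw [← he] at hν
  have he2 : e * e = e := by
    have h1 : e * e = A * (x * A * x) := by rw [he]; noncomm_ring
    rw [hx1] at h1
    rw [← he] at h1
    exact h1
  have heA : e * A = A * e := by
    have h1 : e * A = A * (x * A) := by rw [he]; noncomm_ring
    rw [hxA] at h1
    rw [← he] at h1
    exact h1
  have hecomm : ∀ y : R, y * A = A * y → e * y = y * e := by
    intro y hy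
    have hxy : x * y = y * x := hx2 y hy
    calc e * y = A * (x * y) := by rw [he]; noncomm_ring
      _ = A * (y * x) := by rw [hxy]
      _ = (A * y) * x := by noncomm_ring
      _ = (y * A) * x := by rw [hy]
      _ = y * e := by rw [he]; noncomm_ring
  obtain ⟨ν, hνdef⟩ : ∃ ν : R, ν = A ^ (K+1) - e := ⟨_, rfl⟩
  rw [← hνdef] at hν
  have hApow_e : e * A ^ (K+1) = A ^ (K+1) * e := ((show Commute e A from heA).pow_right (K+1)).eq
  have hνe : ν * e = e * ν := by
    calc ν * e = A ^ (K+1) * e - e * e := by rw [hνdef]; noncomm_ring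
      _ = e * A ^ (K+1) - e * e := by rw [hApow_e]
      _ = e * ν := by rw [hνdef]; noncomm_ring
  obtain ⟨f, hf⟩ : ∃ f : R, f = A * (1 - e) := ⟨_, rfl⟩
  have h1e2 : (1 - e) * (1 - e) = 1 - e := by
    have h1 : (1 - e) * (1 - e) = 1 - e - e + e * e := by noncomm_ring
    rw [he2] at h1; rw [h1]; noncomm_ring
  have hA1e : A * (1 - e) = (1 - e) * A := by
    calc A * (1 - e) = A - A * e := by noncomm_ring
      _ = A - e * A := by rw [← heA]
      _ = (1 - e) * A := by noncomm_ring
  have hfA : f * A = A * f := by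
    calc f * A = A * ((1 - e) * A) := by rw [hf]; noncomm_ring
      _ = A * (A * (1 - e)) := by rw [← hA1e]
      _ = A * f := by rw [hf]
  have hef : e * f = 0 := by
    calc e * f = (e * A) * (1 - e) := by rw [hf]; noncomm_ring
      _ = (A * e) * (1 - e) := by rw [heA]
      _ = A * (e - e * e) := by noncomm_ring
      _ = 0 := by rw [he2]; noncomm_ring
  have hfe : f * e = 0 := by
    calc f * e = A * (e - e * e) := by rw [hf]; noncomm_ring
      _ = 0 := by rw [he2]; noncomm_ring
  have hfpow : f ^ (K+1) = A ^ (K+1) * (1 - e) := by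
    rw [hf, (show Commute A (1 - e) from hA1e).mul_pow, idem_pow_s14 h1e2 K]
  have hfn : f ^ (K+1) = ν * (1 - e) := by
    have h1 : (A ^ (K+1) - e) * (1 - e) = A ^ (K+1) * (1 - e) - (e - e * e) := by noncomm_ring
    rw [he2, sub_self, sub_zero] at h1
    rw [hfpow, hνdef, h1]
  have hν_comm_1e : ν * (1 - e) = (1 - e) * ν := by
    calc ν * (1 - e) = ν - ν * e := by noncomm_ring
      _ = ν - e * ν := by rw [hνe]
      _ = (1 - e) * ν := by noncomm_ring
  have hfrad : inRadJ (f ^ ((K+1) * (K2+1))) := by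
    rw [pow_mul, hfn, (show Commute ν (1-e) from hν_comm_1e).mul_pow]
    exact radJ_mul_right hν _
  have hUf : IsUnit (1 - f) :=
    isUnit_one_sub_of_radJ_pow (Nat.mul_pos (Nat.succ_pos K) (Nat.succ_pos K2)) hfrad
  obtain ⟨v, hv⟩ := hUf
  obtain ⟨z, hz⟩ : ∃ z : R, z = ↑v⁻¹ := ⟨_, rfl⟩
  have hz1 : (1 - f) * z = 1 := by rw [hz, ← hv]; exact v.mul_inv
  have hz2 : z * (1 - f) = 1 := by rw [hz, ← hv]; exact v.inv_mul
  have hcomm_z : ∀ y : R, y * f = f * y → y * z = z * y := by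
    intro y hy
    have h1 : Commute y ↑v := by
      rw [hv]
      show y * (1 - f) = (1 - f) * y
      calc y * (1 - f) = y - y * f := by noncomm_ring
        _ = y - f * y := by rw [hy]
        _ = (1 - f) * y := by noncomm_ring
    have h2 := h1.units_inv_right.eq
    rw [hz]; exact h2
  have hzf : z * f = f * z := (hcomm_z f rfl).symm
  have hzA : z * A = A * z := (hcomm_z A hfA.symm).symm
  have hze' : e * z = z * e := hcomm_z e (by rw [hef, hfe])
  obtain ⟨m, hm⟩ : ∃ m : R, m = (1 - e) * z := ⟨_, rfl⟩
  have hmA : m * A = A * m := by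
    calc m * A = (1 - e) * (z * A) := by rw [hm]; noncomm_ring
      _ = (1 - e) * (A * z) := by rw [hzA]
      _ = ((1 - e) * A) * z := by noncomm_ring
      _ = (A * (1 - e)) * z := by rw [← hA1e]
      _ = A * m := by rw [hm]; noncomm_ring
  have hem : e * m = 0 := by
    calc e * m = (e - e * e) * z := by rw [hm]; noncomm_ring
      _ = 0 := by rw [he2]; noncomm_ring
  have hm2 : ∀ y : R, y * A = A * y → y * m = m * y := by
    intro y hy
    have hye : e * y = y * e := hecomm y hy
    have hyf : y * f = f * y := by
      calc y * f = (y * A) * (1 - e) := by rw [hf]; noncomm_ring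
        _ = (A * y) * (1 - e) := by rw [hy]
        _ = A * (y - y * e) := by noncomm_ring
        _ = A * (y - e * y) := by rw [← hye]
        _ = (A * (1 - e)) * y := by noncomm_ring
        _ = f * y := by rw [hf]
    have hyz := hcomm_z y hyf
    calc y * m = (y - y * e) * z := by rw [hm]; noncomm_ring
      _ = (y - e * y) * z := by rw [← hye]
      _ = (1 - e) * (y * z) := by noncomm_ring
      _ = (1 - e) * (z * y) := by rw [hyz]
      _ = m * y := by rw [hm]; noncomm_ring
  have hmA_fz : m * A = f * z := by
    calc m * A = (1 - e) * (z * A) := by rw [hm]; noncomm_ring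
      _ = (1 - e) * (A * z) := by rw [hzA]
      _ = ((1 - e) * A) * z := by noncomm_ring
      _ = (A * (1 - e)) * z := by rw [← hA1e]
      _ = f * z := by rw [hf]
  have hm_ac : m * (a * c) = 1 - e := by
    have h3 : (1 - e) * (1 - f) = (1 - e) - f := by
      have h4 : (1 - e) * (1 - f) = 1 - f - e + e * f := by noncomm_ring
      rw [hef] at h4; rw [h4]; noncomm_ring
    calc m * (a * c) = m * (1 - A) := by rw [hac]
      _ = m - m * A := by noncomm_ring
      _ = m - f * z := by rw [hmA_fz]
      _ = ((1 - e) - f) * z := by rw [hm]; noncomm_ring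
      _ = ((1 - e) * (1 - f)) * z := by rw [h3]
      _ = (1 - e) * ((1 - f) * z) := by noncomm_ring
      _ = 1 - e := by rw [hz1]; noncomm_ring
  have hac_m : (a * c) * m = 1 - e := by
    have h1 : (1 - A) * m = m * (1 - A) := by
      calc (1 - A) * m = m - A * m := by noncomm_ring
        _ = m - m * A := by rw [← hmA]
        _ = m * (1 - A) := by noncomm_ring
    calc (a * c) * m = (1 - A) * m := by rw [hac]
      _ = m * (1 - A) := h1
      _ = m * (a * c) := by rw [← hac]
      _ = 1 - e := hm_ac
  have haB : a * B = A * a := by rw [hA, hB]; noncomm_ring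
  have hBc : B * c = c * A := by rw [hA, hB]; noncomm_ring
  obtain ⟨q, hq⟩ : ∃ q : R, q = c * (m * a) := ⟨_, rfl⟩
  have hq2 : q * q = q := by
    calc q * q = c * ((m * (a * c)) * (m * a)) := by rw [hq]; noncomm_ring
      _ = c * ((1 - e) * (m * a)) := by rw [hm_ac]
      _ = c * (m * a) - c * ((e * m) * a) := by noncomm_ring
      _ = q := by rw [hem, hq]; noncomm_ring
  have hqB : q * B = B * q := by
    calc q * B = c * (m * (a * B)) := by rw [hq]; noncomm_ring
      _ = c * (m * (A * a)) := by rw [haB]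
      _ = c * ((m * A) * a) := by noncomm_ring
      _ = c * ((A * m) * a) := by rw [hmA]
      _ = (c * A) * (m * a) := by noncomm_ring
      _ = (B * c) * (m * a) := by rw [← hBc]
      _ = B * q := by rw [hq]; noncomm_ring
  have hBq_val : B * q = c * ((m * A) * a) := by
    rw [← hqB]
    calc q * B = c * (m * (a * B)) := by rw [hq]; noncomm_ring
      _ = c * (m * (A * a)) := by rw [haB]
      _ = c * ((m * A) * a) := by noncomm_ring
  obtain ⟨σ, hσ⟩ : ∃ σ : R, σ = ∑ i ∈ Finset.range (K+1), A ^ i := ⟨_, rfl⟩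
  have hgeomA : σ * (1 - A) = 1 - A ^ (K+1) := by
    have h1 := geom_sum_mul A (K+1)
    calc σ * (1 - A) = -((∑ i ∈ Finset.range (K+1), A ^ i) * (A - 1)) := by rw [hσ]; noncomm_ring
      _ = -(A ^ (K+1) - 1) := by rw [h1]
      _ = 1 - A ^ (K+1) := by noncomm_ring
  have hσA : σ * A = A * σ := by
    have h1 : Commute A σ := by
      rw [hσ]; exact Commute.sum_right _ _ _ fun i _ => (Commute.refl A).pow_right i
    exact h1.eq.symm
  have hσe : σ * e = e * σ := by
    have h1 : Commute e σ := by
      rw [hσ]; exact Commute.sum_right _ _ _ fun i _ => (show Commute e A from heA).pow_right i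
    exact h1.eq.symm
  have hσf : σ * f = f * σ := by
    have h1 : Commute f σ := by
      rw [hσ]; exact Commute.sum_right _ _ _ fun i _ => (show Commute f A from hfA).pow_right i
    exact h1.eq.symm
  have hσz : σ * z = z * σ := hcomm_z σ hσf
  have hca_powB : ∀ i : ℕ, (c * a) * B ^ i = c * (A ^ i * a) := by
    intro i
    induction i with
    | zero => rw [pow_zero, pow_zero, mul_one, one_mul]
    | succ i ih =>
      calc (c * a) * B ^ (i+1) = ((c * a) * B ^ i) * B := by rw [pow_succ, ← mul_assoc]
        _ = (c * (A ^ i * a)) * B := by rw [ih]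
        _ = c * (A ^ i * (a * B)) := by noncomm_ring
        _ = c * (A ^ i * (A * a)) := by rw [haB]
        _ = c * ((A ^ i * A) * a) := by noncomm_ring
        _ = c * (A ^ (i+1) * a) := by rw [← pow_succ]
  have h1Bn : (1 : R) - B ^ (K+1) = c * (σ * a) := by
    have hgB : (∑ i ∈ Finset.range (K+1), B ^ i) * (1 - B) = 1 - B ^ (K+1) := by
      have h1 := geom_sum_mul B (K+1)
      calc (∑ i ∈ Finset.range (K+1), B ^ i) * (1 - B)
          = -((∑ i ∈ Finset.range (K+1), B ^ i) * (B - 1)) := by noncomm_ring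
        _ = -(B ^ (K+1) - 1) := by rw [h1]
        _ = 1 - B ^ (K+1) := by noncomm_ring
    have hcommB : (1 - B) * (∑ i ∈ Finset.range (K+1), B ^ i)
        = (∑ i ∈ Finset.range (K+1), B ^ i) * (1 - B) :=
      (Commute.sum_right _ _ _ fun i _ =>
        ((Commute.one_left B).sub_left (Commute.refl B)).pow_right i).eq
    calc (1 : R) - B ^ (K+1) = (1 - B) * (∑ i ∈ Finset.range (K+1), B ^ i) := by
          rw [hcommB, hgB]
      _ = (c * a) * (∑ i ∈ Finset.range (K+1), B ^ i) := by rw [← hca]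
      _ = ∑ i ∈ Finset.range (K+1), (c * a) * B ^ i := by rw [Finset.mul_sum]
      _ = ∑ i ∈ Finset.range (K+1), c * (A ^ i * a) :=
          Finset.sum_congr rfl fun i _ => hca_powB i
      _ = c * (∑ i ∈ Finset.range (K+1), A ^ i * a) := by rw [Finset.mul_sum]
      _ = c * ((∑ i ∈ Finset.range (K+1), A ^ i) * a) := by rw [Finset.sum_mul]
      _ = c * (σ * a) := by rw [hσ]
  obtain ⟨ρ, hρdef⟩ : ∃ ρ : R, ρ = B ^ (K+1) - (1 - q) := ⟨_, rfl⟩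
  have hρ_eq : ρ = c * ((m - σ) * a) := by
    calc ρ = q - ((1 : R) - B ^ (K+1)) := by rw [hρdef]; noncomm_ring
      _ = q - c * (σ * a) := by rw [h1Bn]
      _ = c * ((m - σ) * a) := by rw [hq]; noncomm_ring
  have hmσ : m - σ = f ^ (K+1) * z - σ * e := by
    have hm1f : m * (1 - f) = 1 - e := by
      calc m * (1 - f) = (1 - e) * (z * (1 - f)) := by rw [hm]; noncomm_ring
        _ = 1 - e := by rw [hz2]; noncomm_ring
    have hσe1f : (σ * e) * (1 - f) = σ * e := by
      calc (σ * e) * (1 - f) = σ * (e - e * f) := by noncomm_ring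
        _ = σ * e := by rw [hef]; noncomm_ring
    have hσ1f : σ * (1 - f) = σ - (σ * A) * (1 - e) := by rw [hf]; noncomm_ring
    have hXf : (m - σ + σ * e) * (1 - f) = f ^ (K+1) := by
      calc (m - σ + σ * e) * (1 - f)
          = m * (1 - f) - σ * (1 - f) + (σ * e) * (1 - f) := by noncomm_ring
        _ = (1 - e) - (σ - (σ * A) * (1 - e)) + σ * e := by rw [hm1f, hσe1f, hσ1f]
        _ = (1 - σ * (1 - A)) * (1 - e) := by noncomm_ring
        _ = (1 - (1 - A ^ (K+1))) * (1 - e) := by rw [hgeomA]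
        _ = A ^ (K+1) * (1 - e) := by noncomm_ring
        _ = f ^ (K+1) := hfpow.symm
    have hX : m - σ + σ * e = f ^ (K+1) * z := by
      calc m - σ + σ * e = ((m - σ + σ * e) * (1 - f)) * z := by
            rw [mul_assoc, hz1, mul_one]
        _ = f ^ (K+1) * z := by rw [hXf]
    calc m - σ = (m - σ + σ * e) - σ * e := by noncomm_ring
      _ = f ^ (K+1) * z - σ * e := by rw [hX]
  obtain ⟨TA, hTA⟩ : ∃ TA : R, TA = c * ((f ^ (K+1) * z) * a) := ⟨_, rfl⟩
  obtain ⟨TB, hTB⟩ : ∃ TB : R, TB = c * ((σ * e) * a) := ⟨_, rfl⟩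
  have hρAB : ρ = TA + -TB := by rw [hρ_eq, hmσ, hTA, hTB]; noncomm_ring
  have hAc_of_commA : ∀ w : R, w * A = A * w → w * (a * c) = (a * c) * w := by
    intro w hw
    rw [hac]
    calc w * (1 - A) = w - w * A := by noncomm_ring
      _ = w - A * w := by rw [hw]
      _ = (1 - A) * w := by noncomm_ring
  have hfzA : (f ^ (K+1) * z) * A = A * (f ^ (K+1) * z) := by
    have h1 : f ^ (K+1) * A = A * f ^ (K+1) := ((show Commute A f from hfA.symm).pow_right (K+1)).eq.symm
    calc (f ^ (K+1) * z) * A = f ^ (K+1) * (A * z) := by rw [mul_assoc, hzA]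
      _ = (f ^ (K+1) * A) * z := by noncomm_ring
      _ = (A * f ^ (K+1)) * z := by rw [h1]
      _ = A * (f ^ (K+1) * z) := by noncomm_ring
  have hTA_rad : inRadJ (TA ^ (K2+1)) := by
    have h1 := cpa_pow a c (f ^ (K+1) * z) (hAc_of_commA _ hfzA) K2
    rw [hTA, h1]
    have h2 : (f ^ (K+1) * z) ^ (K2+1) = (ν ^ (K2+1) * (1-e) ^ (K2+1)) * z ^ (K2+1) := by
      rw [(show Commute (f ^ (K+1)) z from ((show Commute f z from hzf.symm).pow_left (K+1))).mul_pow,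
        hfn, (show Commute ν (1-e) from hν_comm_1e).mul_pow]
    rw [h2]
    have heq : c * ((((ν ^ (K2+1) * (1-e) ^ (K2+1)) * z ^ (K2+1)) * (a*c) ^ K2) * a)
        = c * (ν ^ (K2+1) * ((1-e) ^ (K2+1) * (z ^ (K2+1) * ((a*c) ^ K2 * a)))) := by noncomm_ring
    rw [heq]
    exact radJ_mul_left c (radJ_mul_right hν _)
  have hσeA : (σ * e) * A = A * (σ * e) := by
    calc (σ * e) * A = σ * (e * A) := by rw [mul_assoc]
      _ = σ * (A * e) := by rw [heA]
      _ = (σ * A) * e := by noncomm_ring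
      _ = (A * σ) * e := by rw [hσA]
      _ = A * (σ * e) := by noncomm_ring
  have hσe_ac : (σ * e) * (a * c) = -(ν * e) := by
    calc (σ * e) * (a * c) = (σ * e) * (1 - A) := by rw [hac]
      _ = σ * e - σ * (e * A) := by noncomm_ring
      _ = σ * e - σ * (A * e) := by rw [heA]
      _ = (σ * (1 - A)) * e := by noncomm_ring
      _ = (1 - A ^ (K+1)) * e := by rw [hgeomA]
      _ = -(ν * e) := by
          have h9 : ν * e = A ^ (K+1) * e - e := by
            calc ν * e = A ^ (K+1) * e - e * e := by rw [hνdef]; noncomm_ring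
              _ = A ^ (K+1) * e - e := by rw [he2]
          rw [h9]; noncomm_ring
  have hTB_rad : inRadJ (TB ^ (K2+2)) := by
    have h1 := cpa_pow a c (σ * e) (hAc_of_commA _ hσeA) (K2+1)
    rw [hTB, h1]
    have h2 : (σ * e) ^ (K2+1+1) * (a*c) ^ (K2+1) = (σ * e) * ((σ * e) * (a * c)) ^ (K2+1) := by
      rw [(show Commute (σ * e) (a * c) from hAc_of_commA _ hσeA).mul_pow, ← mul_assoc, ← pow_succ']
    rw [h2, hσe_ac]
    have h3 : (ν * e) ^ (K2+1) = ν ^ (K2+1) * e ^ (K2+1) := (show Commute ν e from hνe).mul_pow _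
    rcases Nat.even_or_odd (K2+1) with hev | hod
    · rw [hev.neg_pow, h3]
      have heq : c * (((σ * e) * (ν ^ (K2+1) * e ^ (K2+1))) * a)
          = (c * (σ * e)) * (ν ^ (K2+1) * (e ^ (K2+1) * a)) := by noncomm_ring
      rw [heq]
      exact radJ_mul_left _ (radJ_mul_right hν _)
    · rw [hod.neg_pow, h3]
      have heq : c * (((σ * e) * -(ν ^ (K2+1) * e ^ (K2+1))) * a)
          = -((c * (σ * e)) * (ν ^ (K2+1) * (e ^ (K2+1) * a))) := by noncomm_ring
      rw [heq]
      exact radJ_neg (radJ_mul_left _ (radJ_mul_right hν _))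
  have hXY : (f ^ (K+1) * z) * (σ * e) = (σ * e) * (f ^ (K+1) * z) := by
    have cfσ : Commute f σ := hσf.symm
    have cfe : Commute f e := by show f * e = e * f; rw [hfe, hef]
    have czσ : Commute z σ := hσz.symm
    have cze : Commute z e := hze'.symm
    exact (((cfσ.mul_right cfe).pow_left (K+1)).mul_left (czσ.mul_right cze)).eq
  have hTATB : TA * TB = TB * TA := by
    have hXac := hAc_of_commA _ hfzA
    have hYac := hAc_of_commA _ hσeA
    calc TA * TB = c * (((f ^ (K+1) * z) * ((a*c) * (σ * e))) * a) := by
          rw [hTA, hTB]; noncomm_ring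
      _ = c * (((f ^ (K+1) * z) * ((σ * e) * (a*c))) * a) := by rw [← hYac]
      _ = c * ((((f ^ (K+1) * z) * (σ * e)) * (a*c)) * a) := by noncomm_ring
      _ = c * ((((σ * e) * (f ^ (K+1) * z)) * (a*c)) * a) := by rw [hXY]
      _ = c * (((σ * e) * ((f ^ (K+1) * z) * (a*c))) * a) := by noncomm_ring
      _ = c * (((σ * e) * ((a*c) * (f ^ (K+1) * z))) * a) := by rw [hXac]
      _ = TB * TA := by rw [hTA, hTB]; noncomm_ring
  have hρ_rad : inRadJ (ρ ^ ((K2+1) + (K2+2))) := by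
    rw [hρAB]
    exact radJ_pow_add (show Commute TA (-TB) from (show Commute TA TB from hTATB).neg_right)
      hTA_rad (radJ_neg_pow hTB_rad)
  obtain ⟨KK, hKK⟩ : ∃ KK, (K+1) * (K2+1) = KK + 1 := ⟨K*K2 + K + K2, by ring⟩
  have hBq_pow_rad : inRadJ ((B * q) ^ (KK + 1)) := by
    have hmAA : (m * A) * A = A * (m * A) := by
      calc (m * A) * A = (A * m) * A := by rw [hmA]
        _ = A * (m * A) := by rw [mul_assoc]
    rw [hBq_val, cpa_pow a c (m * A) (hAc_of_commA _ hmAA) KK, hmA_fz,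
      (show Commute f z from hzf.symm).mul_pow]
    have hfKK : f ^ (KK+1) = ν ^ (K2+1) * (1-e) ^ (K2+1) := by
      rw [← hKK, pow_mul, hfn, (show Commute ν (1-e) from hν_comm_1e).mul_pow]
    rw [hfKK]
    have heq : c * ((((ν ^ (K2+1) * (1-e) ^ (K2+1)) * z ^ (KK+1)) * (a*c) ^ KK) * a)
        = c * (ν ^ (K2+1) * ((1-e) ^ (K2+1) * (z ^ (KK+1) * ((a*c) ^ KK * a)))) := by noncomm_ring
    rw [heq]
    exact radJ_mul_left _ (radJ_mul_right hν _)
  have htq : ∀ t : R, t * B = B * t → t * q = q * t := by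
    intro t ht
    have htca : t * (c * a) = (c * a) * t := by
      have h1 : t * B = B * t := ht
      rw [hB] at h1
      have h2 : t - t * (c*a) = t - (c*a) * t := by
        calc t - t * (c*a) = t * (1 - c*a) := by noncomm_ring
          _ = (1 - c*a) * t := h1
          _ = t - (c*a) * t := by noncomm_ring
      exact sub_right_inj.mp h2
    have hd : (a * (t * c)) * A = A * (a * (t * c)) := by
      have h1 : (a * (t * c)) * (a * c) = (a * c) * (a * (t * c)) := by
        calc (a * (t * c)) * (a * c) = a * ((t * (c * a)) * c) := by noncomm_ring
          _ = a * (((c * a) * t) * c) := by rw [htca]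
          _ = (a * c) * (a * (t * c)) := by noncomm_ring
      calc (a * (t * c)) * A = (a * (t * c)) * (1 - a*c) := by rw [hA]
        _ = a * (t * c) - (a * (t * c)) * (a * c) := by noncomm_ring
        _ = a * (t * c) - (a * c) * (a * (t * c)) := by rw [h1]
        _ = (1 - a*c) * (a * (t * c)) := by noncomm_ring
        _ = A * (a * (t * c)) := by rw [← hA]
    have hmd : (a * (t * c)) * m = m * (a * (t * c)) := hm2 _ hd
    have hA1 : (t * q) * (c * a) = t * (c * ((1 - e) * a)) := by
      calc (t * q) * (c * a) = t * (c * ((m * (a * c)) * a)) := by rw [hq]; noncomm_ring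
        _ = t * (c * ((1 - e) * a)) := by rw [hm_ac]
    have hA2 : (q * t) * (c * a) = t * (c * ((1 - e) * a)) := by
      calc (q * t) * (c * a) = c * ((m * (a * (t * c))) * a) := by rw [hq]; noncomm_ring
        _ = c * (((a * (t * c)) * m) * a) := by rw [← hmd]
        _ = ((c * a) * t) * (c * (m * a)) := by noncomm_ring
        _ = (t * (c * a)) * (c * (m * a)) := by rw [← htca]
        _ = t * (c * (((a * c) * m) * a)) := by noncomm_ring
        _ = t * (c * ((1 - e) * a)) := by rw [hac_m]
    have hXB : (t*q - q*t) * B = t*q - q*t := by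
      have h0 : (t*q - q*t) * (c*a) = 0 := by rw [sub_mul, hA1, hA2, sub_self]
      calc (t*q - q*t) * B = (t*q - q*t) - (t*q - q*t) * (c*a) := by rw [hB]; noncomm_ring
        _ = t*q - q*t := by rw [h0]; noncomm_ring
    have hBX : B * (t*q - q*t) = t*q - q*t := by
      have h1 : B * (t*q) = (t*q) * B := by
        calc B * (t*q) = (B*t)*q := by noncomm_ring
          _ = (t*B)*q := by rw [ht]
          _ = t*(B*q) := by noncomm_ring
          _ = t*(q*B) := by rw [← hqB]
          _ = (t*q)*B := by noncomm_ring
      have h2 : B * (q*t) = (q*t) * B := by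
        calc B * (q*t) = (B*q)*t := by noncomm_ring
          _ = (q*B)*t := by rw [hqB]
          _ = q*(B*t) := by noncomm_ring
          _ = q*(t*B) := by rw [← ht]
          _ = (q*t)*B := by noncomm_ring
      calc B * (t*q - q*t) = B*(t*q) - B*(q*t) := by noncomm_ring
        _ = (t*q)*B - (q*t)*B := by rw [h1, h2]
        _ = (t*q - q*t)*B := by noncomm_ring
        _ = t*q - q*t := hXB
    have hXl : ∀ M : ℕ, B ^ M * (t*q - q*t) = t*q - q*t := by
      intro M
      induction M with
      | zero => rw [pow_zero, one_mul]
      | succ M ih => rw [pow_succ, mul_assoc, hBX, ih]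
    have hXr : ∀ M : ℕ, (t*q - q*t) * B ^ M = t*q - q*t := by
      intro M
      induction M with
      | zero => rw [pow_zero, mul_one]
      | succ M ih => rw [pow_succ, ← mul_assoc, ih, hXB]
    have hjq_eq : (B*q) ^ (KK+1) = B ^ (KK+1) * q := by
      rw [(show Commute B q from hqB.symm).mul_pow, idem_pow_s14 hq2 KK]
    have hqBpow : q * B ^ (KK+1) = B ^ (KK+1) * q := ((show Commute q B from hqB).pow_right (KK+1)).eq
    have hUj : IsUnit (1 - (B*q) ^ (KK+1)) := by
      have h1 := hBq_pow_rad 1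
      rwa [one_mul] at h1
    obtain ⟨w, hw⟩ := hUj
    have hw1 : (↑w⁻¹ : R) * (1 - (B*q)^(KK+1)) = 1 := by rw [← hw]; exact w.inv_mul
    have hw2 : (1 - (B*q)^(KK+1)) * (↑w⁻¹ : R) = 1 := by rw [← hw]; exact w.mul_inv
    have hqX0 : q * (t*q - q*t) = 0 := by
      have e1 : q * (t*q - q*t) = (B*q)^(KK+1) * (t*q - q*t) := by
        calc q * (t*q - q*t) = q * (B^(KK+1) * (t*q - q*t)) := by rw [hXl]
          _ = (q * B^(KK+1)) * (t*q - q*t) := by rw [← mul_assoc]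
          _ = (B^(KK+1) * q) * (t*q - q*t) := by rw [hqBpow]
          _ = (B*q)^(KK+1) * (t*q - q*t) := by rw [← hjq_eq]
      have hjg : (B*q)^(KK+1) * (1 - q) = 0 := by
        rw [hjq_eq]
        calc B^(KK+1) * q * (1-q) = B^(KK+1) * (q - q*q) := by noncomm_ring
          _ = 0 := by rw [hq2]; noncomm_ring
      have e2 : (B*q)^(KK+1) * (t*q - q*t) = (B*q)^(KK+1) * (q * (t*q - q*t)) := by
        calc (B*q)^(KK+1) * (t*q - q*t)
            = (B*q)^(KK+1) * (q * (t*q - q*t)) + ((B*q)^(KK+1) * (1 - q)) * (t*q - q*t) := by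
              noncomm_ring
          _ = (B*q)^(KK+1) * (q * (t*q - q*t)) := by rw [hjg]; noncomm_ring
      have e3 : (1 - (B*q)^(KK+1)) * (q * (t*q - q*t)) = 0 := by
        calc (1 - (B*q)^(KK+1)) * (q * (t*q - q*t))
            = q * (t*q - q*t) - (B*q)^(KK+1) * (q * (t*q - q*t)) := by noncomm_ring
          _ = q * (t*q - q*t) - (B*q)^(KK+1) * (t*q - q*t) := by rw [← e2]
          _ = q * (t*q - q*t) - q * (t*q - q*t) := by rw [← e1]
          _ = 0 := sub_self _
      calc q * (t*q - q*t) = (↑w⁻¹ * (1 - (B*q)^(KK+1))) * (q * (t*q - q*t)) := by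
            rw [hw1, one_mul]
        _ = ↑w⁻¹ * ((1 - (B*q)^(KK+1)) * (q * (t*q - q*t))) := by rw [mul_assoc]
        _ = 0 := by rw [e3, mul_zero]
    have hXq0 : (t*q - q*t) * q = 0 := by
      have e1 : (t*q - q*t) * q = (t*q - q*t) * (B*q)^(KK+1) := by
        calc (t*q - q*t) * q = ((t*q - q*t) * B^(KK+1)) * q := by rw [hXr]
          _ = (t*q - q*t) * (B^(KK+1) * q) := by rw [mul_assoc]
          _ = (t*q - q*t) * (B*q)^(KK+1) := by rw [← hjq_eq]
      have hqj : q * (B*q)^(KK+1) = (B*q)^(KK+1) := by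
        rw [hjq_eq]
        calc q * (B^(KK+1) * q) = (q * B^(KK+1)) * q := by rw [← mul_assoc]
          _ = (B^(KK+1) * q) * q := by rw [hqBpow]
          _ = B^(KK+1) * (q*q) := by rw [mul_assoc]
          _ = B^(KK+1) * q := by rw [hq2]
      have e2 : (t*q - q*t) * (B*q)^(KK+1) = ((t*q - q*t) * q) * (B*q)^(KK+1) := by
        calc (t*q - q*t) * (B*q)^(KK+1) = (t*q - q*t) * (q * (B*q)^(KK+1)) := by rw [hqj]
          _ = ((t*q - q*t) * q) * (B*q)^(KK+1) := by rw [← mul_assoc]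
      have e3 : ((t*q - q*t) * q) * (1 - (B*q)^(KK+1)) = 0 := by
        calc ((t*q - q*t) * q) * (1 - (B*q)^(KK+1))
            = (t*q - q*t)*q - ((t*q - q*t)*q) * (B*q)^(KK+1) := by noncomm_ring
          _ = (t*q - q*t)*q - (t*q - q*t) * (B*q)^(KK+1) := by rw [← e2]
          _ = (t*q - q*t)*q - (t*q - q*t)*q := by rw [← e1]
          _ = 0 := sub_self _
      calc (t*q - q*t) * q = ((t*q - q*t) * q) * ((1 - (B*q)^(KK+1)) * ↑w⁻¹) := by
            rw [hw2, mul_one]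
        _ = (((t*q - q*t) * q) * (1 - (B*q)^(KK+1))) * ↑w⁻¹ := by rw [← mul_assoc]
        _ = 0 := by rw [e3, zero_mul]
    have h6 : q*(t*q) - q*(q*t) = 0 := by rw [← mul_sub]; exact hqX0
    have h5 : q*(t*q) = q*t := by
      have h7 : q*(q*t) = q*t := by rw [← mul_assoc, hq2]
      rw [sub_eq_zero] at h6
      rw [h6, h7]
    have h9 : (t*q)*q = (q*t)*q := by
      have h10 : (t*q)*q - (q*t)*q = 0 := by rw [← sub_mul]; exact hXq0
      rw [sub_eq_zero] at h10
      exact h10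
    calc t*q = (t*q)*q := by rw [mul_assoc, hq2]
      _ = (q*t)*q := h9
      _ = q*(t*q) := by rw [mul_assoc]
      _ = q*t := h5
  obtain ⟨s, hs⟩ : ∃ s : R, s = (1-q) * B^(K+1) - (1-q) := ⟨_, rfl⟩
  have hg2 : (1-q)*(1-q) = 1-q := by
    have h1 : (1-q)*(1-q) = 1 - q - q + q*q := by noncomm_ring
    rw [hq2] at h1; rw [h1]; noncomm_ring
  have hqBpow' : ∀ M : ℕ, q * B^M = B^M * q := fun M => ((show Commute q B from hqB).pow_right M).eq
  have hgBpow : ∀ M : ℕ, B^M * (1-q) = (1-q) * B^M := by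
    intro M
    calc B^M * (1-q) = B^M - B^M * q := by noncomm_ring
      _ = B^M - q * B^M := by rw [← hqBpow' M]
      _ = (1-q) * B^M := by noncomm_ring
  have hqρ : q * ρ = ρ * q := by
    calc q * ρ = q * B^(K+1) - (q - q*q) := by rw [hρdef]; noncomm_ring
      _ = B^(K+1) * q - (q - q*q) := by rw [hqBpow' (K+1)]
      _ = ρ * q := by rw [hρdef]; noncomm_ring
  have hs_eq : s = (1-q) * ρ := by
    have h1 : (1-q) * ρ = (1-q) * B^(K+1) - ((1-q)*(1-q)) := by rw [hρdef]; noncomm_ring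
    rw [hg2] at h1
    rw [hs, h1]
  have hgρ : (1-q) * ρ = ρ * (1-q) := by
    calc (1-q)*ρ = ρ - q*ρ := by noncomm_ring
      _ = ρ - ρ*q := by rw [hqρ]
      _ = ρ*(1-q) := by noncomm_ring
  have hs_rad : inRadJ (s ^ ((K2+1)+(K2+2))) := by
    rw [hs_eq, (show Commute (1-q) ρ from hgρ).mul_pow]
    exact radJ_mul_left _ hρ_rad
  have hU : IsUnit (1 + s) := by
    have h1 : IsUnit (1 - (-s)) := isUnit_one_sub_of_radJ_pow (by omega) (radJ_neg_pow hs_rad)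
    rwa [sub_neg_eq_add] at h1
  obtain ⟨V, hV⟩ := hU
  obtain ⟨u, hu⟩ : ∃ u : R, u = ↑V⁻¹ := ⟨_, rfl⟩
  have hu1 : (1+s)*u = 1 := by rw [hu, ← hV]; exact V.mul_inv
  have hu2 : u*(1+s) = 1 := by rw [hu, ← hV]; exact V.inv_mul
  have hcomm_u : ∀ w : R, w*s = s*w → w*u = u*w := by
    intro w hw
    have h1 : Commute w ↑V := by
      rw [hV]
      show w*(1+s) = (1+s)*w
      calc w*(1+s) = w + w*s := by noncomm_ring
        _ = w + s*w := by rw [hw]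
        _ = (1+s)*w := by noncomm_ring
    have h2 := h1.units_inv_right.eq
    rw [hu]; exact h2
  have hgB' : B*(1-q) = (1-q)*B := by
    calc B*(1-q) = B - B*q := by noncomm_ring
      _ = B - q*B := by rw [← hqB]
      _ = (1-q)*B := by noncomm_ring
  have hBρ : B*ρ = ρ*B := by
    have hBBpow : B*B^(K+1) = B^(K+1)*B := ((Commute.refl B).pow_right (K+1)).eq
    calc B*ρ = B*B^(K+1) - (B - B*q) := by rw [hρdef]; noncomm_ring
      _ = B^(K+1)*B - (B - q*B) := by rw [hBBpow, ← hqB]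
      _ = ρ*B := by rw [hρdef]; noncomm_ring
  have hBs : B*s = s*B := by
    calc B*s = (B*(1-q))*ρ := by rw [hs_eq, ← mul_assoc]
      _ = ((1-q)*B)*ρ := by rw [hgB']
      _ = (1-q)*(B*ρ) := by rw [mul_assoc]
      _ = (1-q)*(ρ*B) := by rw [hBρ]
      _ = ((1-q)*ρ)*B := by rw [← mul_assoc]
      _ = s*B := by rw [← hs_eq]
  have hBu : B*u = u*B := hcomm_u B hBs
  have hgs1 : (1-q)*s = s := by
    calc (1-q)*s = ((1-q)*(1-q))*ρ := by rw [hs_eq, ← mul_assoc]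
      _ = (1-q)*ρ := by rw [hg2]
      _ = s := by rw [← hs_eq]
  have hgs2 : s*(1-q) = s := by
    calc s*(1-q) = (1-q)*(ρ*(1-q)) := by rw [hs_eq, mul_assoc]
      _ = (1-q)*((1-q)*ρ) := by rw [← hgρ]
      _ = ((1-q)*(1-q))*ρ := by rw [← mul_assoc]
      _ = s := by rw [hg2, ← hs_eq]
  have hgs : (1-q)*s = s*(1-q) := by rw [hgs1, hgs2]
  have hgu : (1-q)*u = u*(1-q) := hcomm_u _ hgs
  have hgV_id : (1-q)*(1+s) = (1-q)*B^(K+1) := by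
    calc (1-q)*(1+s) = (1-q) + (1-q)*s := by noncomm_ring
      _ = (1-q) + s := by rw [hgs1]
      _ = (1-q)*B^(K+1) := by rw [hs]; noncomm_ring
  have hkey_gu : B^(K+1) * ((1-q)*u) = 1-q := by
    have h1 : ((1-q)*B^(K+1))*u = 1-q := by
      rw [← hgV_id, mul_assoc, hu1, mul_one]
    calc B^(K+1) * ((1-q)*u) = (B^(K+1)*(1-q))*u := by rw [← mul_assoc]
      _ = ((1-q)*B^(K+1))*u := by rw [hgBpow (K+1)]
      _ = 1-q := h1
  refine ⟨B^K * ((1-q)*u), ?_, ?_, ⟨K+1, by omega, ?_⟩⟩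
  · -- y * B * y = y
    have h2 : ((1-q)*u)*B = B*((1-q)*u) := by
      calc ((1-q)*u)*B = (1-q)*(u*B) := by rw [mul_assoc]
        _ = (1-q)*(B*u) := by rw [← hBu]
        _ = ((1-q)*B)*u := by rw [← mul_assoc]
        _ = (B*(1-q))*u := by rw [← hgB']
        _ = B*((1-q)*u) := by rw [mul_assoc]
    have hyB : (B^K * ((1-q)*u)) * B = 1 - q := by
      calc (B^K * ((1-q)*u)) * B = B^K * (((1-q)*u)*B) := by rw [mul_assoc]
        _ = B^K * (B*((1-q)*u)) := by rw [h2]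
        _ = (B^K*B) * ((1-q)*u) := by rw [← mul_assoc]
        _ = B^(K+1) * ((1-q)*u) := by rw [show B^K*B = B^(K+1) from (pow_succ B K).symm]
        _ = 1-q := hkey_gu
    calc (B^K * ((1-q)*u)) * B * (B^K * ((1-q)*u)) = (1-q) * (B^K * ((1-q)*u)) := by rw [hyB]
      _ = ((1-q)*B^K) * ((1-q)*u) := by rw [← mul_assoc]
      _ = (B^K*(1-q)) * ((1-q)*u) := by rw [← hgBpow K]
      _ = B^K*(((1-q)*(1-q))*u) := by noncomm_ring
      _ = B^K*((1-q)*u) := by rw [hg2]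
  · -- inComm2
    intro t ht
    have h1 : t*q = q*t := htq t ht
    have htg : t*(1-q) = (1-q)*t := by
      calc t*(1-q) = t - t*q := by noncomm_ring
        _ = t - q*t := by rw [h1]
        _ = (1-q)*t := by noncomm_ring
    have htBpow : ∀ M : ℕ, t*B^M = B^M*t := fun M => ((show Commute t B from ht).pow_right M).eq
    have hts : t*s = s*t := by
      have hts1 : t*((1-q)*B^(K+1)) = ((1-q)*B^(K+1))*t := by
        calc t*((1-q)*B^(K+1)) = (t*(1-q))*B^(K+1) := by rw [← mul_assoc]
          _ = ((1-q)*t)*B^(K+1) := by rw [htg]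
          _ = (1-q)*(t*B^(K+1)) := by rw [mul_assoc]
          _ = (1-q)*(B^(K+1)*t) := by rw [htBpow (K+1)]
          _ = ((1-q)*B^(K+1))*t := by rw [← mul_assoc]
      calc t*s = t*((1-q)*B^(K+1)) - t*(1-q) := by rw [hs]; noncomm_ring
        _ = ((1-q)*B^(K+1))*t - (1-q)*t := by rw [hts1, htg]
        _ = s*t := by rw [hs]; noncomm_ring
    have htu : t*u = u*t := hcomm_u t hts
    show (B^K*((1-q)*u))*t = t*(B^K*((1-q)*u))
    calc (B^K*((1-q)*u))*t = B^K*((1-q)*(u*t)) := by noncomm_ring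
      _ = B^K*((1-q)*(t*u)) := by rw [htu]
      _ = B^K*(((1-q)*t)*u) := by noncomm_ring
      _ = B^K*((t*(1-q))*u) := by rw [← htg]
      _ = (B^K*t)*((1-q)*u) := by noncomm_ring
      _ = (t*B^K)*((1-q)*u) := by rw [← htBpow K]
      _ = t*(B^K*((1-q)*u)) := by noncomm_ring
  · -- inSqrtJ
    have hBy : B*(B^K*((1-q)*u)) = 1-q := by
      calc B*(B^K*((1-q)*u)) = (B*B^K)*((1-q)*u) := by rw [← mul_assoc]
        _ = B^(K+1)*((1-q)*u) := by rw [show B*B^K = B^(K+1) from (pow_succ' B K).symm]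
        _ = 1-q := hkey_gu
    rw [hBy, ← hρdef]
    exact ⟨(K2+1)+(K2+2), by omega, hρ_rad⟩

theorem jacPair {R : Type*} [Ring R] (a b : R) :
    ∀ k : ℕ, ∃ t : R, (1 - a * b) ^ k = 1 - a * t ∧ (1 - b * a) ^ k = 1 - t * a ∧
      t * (a * b) = (b * a) * t := by
  intro k
  induction k with
  | zero => exact ⟨0, by simp, by simp, by simp⟩
  | succ k ih =>
    obtain ⟨t, h1, h2, h3⟩ := ih
    refine ⟨b + t - t * (a * b), ?_, ?_, ?_⟩
    · rw [pow_succ, h1]; noncomm_ring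
    · rw [pow_succ, h2]; noncomm_ring
    · have e1 : (b + t - t * (a * b)) * (a * b)
          = b * (a * b) + t * (a * b) - (t * (a * b)) * (a * b) := by noncomm_ring
      have e2 : (b * a) * (b + t - t * (a * b))
          = b * (a * b) + (b * a) * t - (b * a) * (t * (a * b)) := by noncomm_ring
      rw [e1, e2, h3]
      have e4 : ((b * a) * t) * (a * b) = (b * a) * ((b * a) * t) := by
        calc ((b * a) * t) * (a * b) = (b * a) * (t * (a * b)) := by noncomm_ring
          _ = (b * a) * ((b * a) * t) := by rw [h3]
      rw [show b * a * t * (a * b) = b * a * (b * a * t) from e4]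


theorem stmt14 {R : Type*} [Ring R] (a b : R) (k : ℕ) (hk : 0 < k)
    (h : ∃ x : R, IsGZhouInv ((1 - a * b) ^ k) x) :
    ∃ y : R, IsGZhouInv ((1 - b * a) ^ k) y := by
  obtain ⟨x, hx⟩ := h
  obtain ⟨t, h1, h2, -⟩ := jacPair a b k
  rw [h1] at hx
  rw [h2]
  exact coreJac a t x hx
end
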